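/- If 𝔟 = 𝔡, there is a family {T(α) : α < 𝔡} of Hechler trees in ω^{≤ n+1} such that (1) for all α < β there is N ∈ ω with T(β) ⊆ T(α) ∪ ⋃_{i<N} C_i, and (2) for every X ∈ FIN^{n+1} there is α < 𝔡 such that for every β > α there is N ∈ ω with X ∩ T(β) ⊆ ⋃_{i<N} C_i. -/

import Mathlib

/-- `f ≤* g` : eventual domination. -/
def LeStar (f g : ℕ → ℕ) : Prop := {n | g n < f n}.Finite

/-- The bounding number 𝔟. -/
noncomputable def bNumber : Cardinal :=
  sInf {c | ∃ F : Set (ℕ → ℕ), Cardinal.mk F = c ∧ ∀ g : ℕ → ℕ, ∃ f ∈ F, ¬ LeStar f g}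

/-- The dominating number 𝔡. -/
noncomputable def dNumber : Cardinal :=
  sInf {c | ∃ F : Set (ℕ → ℕ), Cardinal.mk F = c ∧ ∀ g : ℕ → ℕ, ∃ f ∈ F, LeStar g f}

/-- `FINpow n` is the Fubini power `FIN^(n+1)`, an ideal on `ω^(n+1)`. -/
def FINpow : (n : ℕ) → Set (Set (Fin (n + 1) → ℕ))
  | 0 => {A | A.Finite}
  | n + 1 => {A | {s : Fin (n + 1) → ℕ | {m : ℕ | Fin.snoc s m ∈ A}.Infinite} ∈ FINpow n}

/-- A Hechler tree inside `ω^{≤ n+1}` (nodes are lists of naturals of length `≤ n+1`):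
the set of immediate successors of every node of length `≤ n` is coinitial,
i.e. of the form `ω \ k`. -/
def IsHechlerTree (n : ℕ) (T : Set (List ℕ)) : Prop :=
  ([] ∈ T) ∧ (∀ s ∈ T, s.length ≤ n + 1) ∧
  (∀ s ∈ T, ∀ t : List ℕ, t <+: s → t ∈ T) ∧
  ∀ s ∈ T, s.length ≤ n → ∃ k : ℕ, ∀ i : ℕ, (s ++ [i]) ∈ T ↔ k ≤ i

lemma leStar_trans {a b c : ℕ → ℕ} (h1 : LeStar a b) (h2 : LeStar b c) : LeStar a c := by
  refine ((h1.union h2).subset ?_)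
  intro x hx
  rcases lt_or_ge (b x) (a x) with hh | hh
  · exact Or.inl hh
  · exact Or.inr (lt_of_lt_of_le hx hh)

lemma leStar_of_le {a b : ℕ → ℕ} (h : ∀ x, a x ≤ b x) : LeStar a b := by
  have : {n | b n < a n} = ∅ := by
    ext x; simp [Nat.not_lt.mpr (h x)]
  rw [LeStar, this]; exact Set.finite_empty

lemma leStar_mono_right {a b c : ℕ → ℕ} (h1 : LeStar a b) (h : ∀ x, b x ≤ c x) :
    LeStar a c := leStar_trans h1 (leStar_of_le h)

/-- Families smaller than 𝔟 are bounded. -/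
lemma bounded_of_lt_b (F : Set (ℕ → ℕ)) (hF : Cardinal.mk F < bNumber) :
    ∃ g, ∀ f ∈ F, LeStar f g := by
  by_contra hc
  push_neg at hc
  have : Cardinal.mk F ∈ {c | ∃ F : Set (ℕ → ℕ), Cardinal.mk F = c ∧
      ∀ g : ℕ → ℕ, ∃ f ∈ F, ¬ LeStar f g} := by
    exact ⟨F, rfl, fun g => by
      obtain ⟨f, hf1, hf2⟩ := hc g
      exact ⟨f, hf1, hf2⟩⟩
  exact absurd (csInf_le' this) (not_le.mpr hF)

lemma d_set_nonempty : {c | ∃ F : Set (ℕ → ℕ), Cardinal.mk F = c ∧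
    ∀ g : ℕ → ℕ, ∃ f ∈ F, LeStar g f}.Nonempty := by
  refine ⟨Cardinal.mk (Set.univ : Set (ℕ → ℕ)), Set.univ, rfl, fun g => ⟨g, trivial, ?_⟩⟩
  exact leStar_of_le (fun x => le_rfl)

/-- A dominating family of size exactly 𝔡. -/
lemma exists_dominating : ∃ F : Set (ℕ → ℕ), Cardinal.mk F = dNumber ∧
    ∀ g : ℕ → ℕ, ∃ f ∈ F, LeStar g f :=
  csInf_mem d_set_nonempty

lemma aleph0_le_d : Cardinal.aleph0 ≤ dNumber := by
  rw [dNumber]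
  apply le_csInf d_set_nonempty
  rintro c ⟨F, rfl, hdom⟩
  by_contra hlt
  push_neg at hlt
  have hfin : F.Finite := Cardinal.lt_aleph0_iff_set_finite.mp hlt
  -- build a function escaping all of F
  set g : ℕ → ℕ := fun x => (hfin.toFinset.sup (fun f => f x)) + 1 with hg
  obtain ⟨f, hfF, hdf⟩ := hdom g
  have : {n | f n < g n} = Set.univ := by
    ext x
    simp only [Set.mem_setOf_eq, Set.mem_univ, iff_true, hg]
    exact Nat.lt_succ_of_le (Finset.le_sup (f := fun f => f x) (hfin.mem_toFinset.mpr hfF))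
  rw [LeStar, this] at hdf
  exact Set.infinite_univ hdf

lemma exists_scale (h : bNumber = dNumber) :
    ∃ f : Ordinal → (ℕ → ℕ),
      (∀ α, ∀ x, x < f α x) ∧
      (∀ ξ α, ξ < α → α < dNumber.ord → LeStar (f ξ) (f α)) ∧
      (∀ g, ∃ α < dNumber.ord, LeStar g (f α)) := by
  obtain ⟨F, hFmk, hFdom⟩ := exists_dominating
  have hmk : Cardinal.mk dNumber.ord.ToType = Cardinal.mk F := by
    rw [Cardinal.mk_ord_toType, hFmk]
  obtain ⟨e⟩ := Cardinal.eq.mp hmk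
  set d : Ordinal → (ℕ → ℕ) := fun γ =>
    if hγ : γ < dNumber.ord then (e ((@Ordinal.ToType.mk _) ⟨γ, hγ⟩) : ℕ → ℕ)
    else fun x => x + 1 with hd
  have step : ∀ (α : Ordinal), α < dNumber.ord → ∀ (ih : ∀ β, β < α → (ℕ → ℕ)),
      ∃ g : ℕ → ℕ, (∀ x, x < g x) ∧ (∀ β (hβ : β < α), LeStar (ih β hβ) g) ∧
        LeStar (d α) g := by
    intro α hα ih
    have hcard : (α.card : Cardinal) < bNumber := by
      rw [h]; exact Cardinal.lt_ord.mp hα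
    set q : ↥(Set.Iio α) → (ℕ → ℕ) := fun p => ih p.1 p.2 with hq
    set G : Set (ℕ → ℕ) :=
      Set.range (fun x : α.ToType => q ((@Ordinal.ToType.mk α).symm x)) with hG
    have hGmk : Cardinal.mk G < bNumber := by
      refine lt_of_le_of_lt ?_ hcard
      rw [← Cardinal.mk_toType]
      exact Cardinal.mk_range_le
    obtain ⟨g₀, hg₀⟩ := bounded_of_lt_b G hGmk
    refine ⟨fun x => g₀ x + d α x + x + 1,
      fun x => by show x < g₀ x + d α x + x + 1; omega, ?_, ?_⟩
    · intro β hβ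
      have hmem : ih β hβ ∈ G := by
        refine ⟨(@Ordinal.ToType.mk α) ⟨β, hβ⟩, ?_⟩
        show q _ = _
        rw [OrderIso.symm_apply_apply]
      exact leStar_mono_right (hg₀ _ hmem)
        (fun x => by show _ ≤ g₀ x + d α x + x + 1; omega)
    · exact leStar_of_le (fun x => by show _ ≤ g₀ x + d α x + x + 1; omega)
  classical
  set step' : (α : Ordinal) → (∀ β, β < α → (ℕ → ℕ)) → (ℕ → ℕ) := fun α ih =>
    if hα : α < dNumber.ord then (step α hα ih).choose else fun x => x + 1 with hstep'
  set f : Ordinal → (ℕ → ℕ) := Ordinal.lt_wf.fix step' with hf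
  have hfeq : ∀ α, f α = step' α (fun β _ => f β) := fun α => Ordinal.lt_wf.fix_eq step' α
  have hspec : ∀ α (hα : α < dNumber.ord),
      (∀ x, x < f α x) ∧ (∀ β (hβ : β < α), LeStar (f β) (f α)) ∧ LeStar (d α) (f α) := by
    intro α hα
    have : f α = (step α hα (fun β _ => f β)).choose := by
      rw [hfeq α]; exact dif_pos hα
    rw [this]
    exact (step α hα (fun β _ => f β)).choose_spec
  refine ⟨f, ?_, ?_, ?_⟩
  · intro α x
    by_cases hα : α < dNumber.ord
    · exact (hspec α hα).1 x
    · have : f α = fun x => x + 1 := by rw [hfeq α]; exact dif_neg hα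
      rw [this]; exact Nat.lt_succ_self x
  · intro ξ α hξα hα
    exact (hspec α hα).2.1 ξ hξα
  · intro g
    obtain ⟨f₀, hf₀, hgf₀⟩ := hFdom g
    set γ : ↥(Set.Iio dNumber.ord) := (@Ordinal.ToType.mk _).symm (e.symm ⟨f₀, hf₀⟩) with hγdef
    refine ⟨γ.1, γ.2, ?_⟩
    have hdγ : d γ.1 = f₀ := by
      have h1 : d γ.1 = ((e ((@Ordinal.ToType.mk dNumber.ord) γ)) : ℕ → ℕ) :=
        dif_pos γ.2
      rw [h1, hγdef, OrderIso.apply_symm_apply, Equiv.apply_symm_apply]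
    have := (hspec γ.1 γ.2).2.2
    rw [hdγ] at this
    exact leStar_trans hgf₀ this

/-- chain condition: consecutive entries grow according to `f`. -/
def ChainCond (f : ℕ → ℕ) (s : List ℕ) : Prop :=
  ∀ j, j + 1 < s.length → f (s.getD j 0) ≤ s.getD (j + 1) 0

/-- The Hechler tree associated to `f`. -/
def Tr (n : ℕ) (f : ℕ → ℕ) : Set (List ℕ) := {s | s.length ≤ n + 1 ∧ ChainCond f s}

lemma tr_hechler (n : ℕ) (f : ℕ → ℕ) : IsHechlerTree n (Tr n f) := by
  refine ⟨⟨by simp, fun j hj => by simp at hj⟩, fun s hs => hs.1, ?_, ?_⟩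
  · rintro s ⟨hs1, hs2⟩ t ht
    refine ⟨le_trans ht.length_le hs1, ?_⟩
    intro j hj
    have h1 : t.getD j 0 = s.getD j 0 := by
      rw [List.getD_eq_getElem _ _ (by omega), List.getD_eq_getElem _ _
        (lt_of_lt_of_le (by omega) ht.length_le), ht.getElem (by omega)]
    have h2 : t.getD (j+1) 0 = s.getD (j+1) 0 := by
      rw [List.getD_eq_getElem _ _ hj, List.getD_eq_getElem _ _
        (lt_of_lt_of_le hj ht.length_le), ht.getElem hj]
    rw [h1, h2]
    exact hs2 j (lt_of_lt_of_le hj ht.length_le)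
  · rintro s ⟨hs1, hs2⟩ hlen
    rcases eq_or_ne s [] with rfl | hne
    · refine ⟨0, fun i => ?_⟩
      simp only [List.nil_append, Nat.zero_le, iff_true]
      exact ⟨by simp, fun j hj => by simp at hj⟩
    · have hpos : 0 < s.length := List.length_pos_iff.mpr hne
      refine ⟨f (s.getD (s.length - 1) 0), fun i => ?_⟩
      constructor
      · rintro ⟨_, hc⟩
        have := hc (s.length - 1) (by simp; omega)
        rwa [List.getD_append _ _ _ _ (by omega),
          (by omega : s.length - 1 + 1 = s.length),
          List.getD_append_right _ _ _ _ (le_refl _), Nat.sub_self,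
          List.getD_cons_zero] at this
      · intro hk
        refine ⟨by simp; omega, ?_⟩
        intro j hj
        simp only [List.length_append, List.length_cons, List.length_nil] at hj
        rcases lt_or_ge (j+1) s.length with hlt | hge
        · rw [List.getD_append _ _ _ _ (by omega), List.getD_append _ _ _ _ hlt]
          exact hs2 j hlt
        · have hj1 : j + 1 = s.length := by omega
          rw [List.getD_append _ _ _ _ (by omega), hj1,
            List.getD_append_right _ _ _ _ (le_refl _), Nat.sub_self,
            List.getD_cons_zero]
          have : j = s.length - 1 := by omega
          rw [this]; exact hk

lemma head?_eq (s : List ℕ) (h : s ≠ []) : s.head? = some (s.getD 0 0) := by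
  cases s with
  | nil => exact absurd rfl h
  | cons a t => simp

lemma tr_almost_subset (n : ℕ) (f g : ℕ → ℕ) (hg : ∀ x, x < g x) (hfg : LeStar f g) :
    ∃ N : ℕ, ∀ s ∈ Tr n g, s ∈ Tr n f ∨ ∃ i < N, s.head? = some i := by
  obtain ⟨b, hb⟩ := hfg.bddAbove
  refine ⟨b + 1, ?_⟩
  rintro s ⟨hs1, hs2⟩
  rcases eq_or_ne s [] with rfl | hne
  · exact Or.inl ⟨by simp, fun j hj => by simp at hj⟩
  · rcases lt_or_ge (s.getD 0 0) (b + 1) with hlt | hge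
    · exact Or.inr ⟨s.getD 0 0, hlt, head?_eq s hne⟩
    · left
      have key : ∀ j, j < s.length → b + 1 ≤ s.getD j 0 := by
        intro j
        induction j with
        | zero => intro _; exact hge
        | succ j ihj =>
          intro hj
          have h1 := ihj (by omega)
          have h2 := hs2 j hj
          have := hg (s.getD j 0)
          omega
      refine ⟨hs1, fun j hj => ?_⟩
      have hnotE : s.getD j 0 ∉ {x | g x < f x} := by
        intro hmem
        have := hb hmem
        have := key j (by omega)
        omega
      simp only [Set.mem_setOf_eq, not_lt] at hnotE
      exact le_trans hnotE (hs2 j hj)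

lemma finpow_bound (n : ℕ) (X : Set (Fin (n+1) → ℕ)) (hX : X ∈ FINpow n) :
    ∃ h : ℕ → ℕ, ∀ f : ℕ → ℕ, (∀ x, x < f x) → LeStar h f →
      {i | ∃ t ∈ X, t 0 = i ∧ ∀ j : Fin n, f (t j.castSucc) ≤ t j.succ}.Finite := by
  induction n with
  | zero =>
    refine ⟨fun _ => 0, fun f _ _ => ?_⟩
    have hXf : X.Finite := hX
    refine (hXf.image (fun t => t 0)).subset ?_
    rintro i ⟨t, ht, rfl, _⟩
    exact ⟨t, ht, rfl⟩
  | succ n IH =>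
    set S := {s : Fin (n+1) → ℕ | {m : ℕ | Fin.snoc s m ∈ X}.Infinite} with hS
    have hSmem : S ∈ FINpow n := hX
    obtain ⟨h₀, hh₀⟩ := IH S hSmem
    -- the union of all sections over small non-S nodes
    set U : ℕ → Set ℕ := fun v =>
      {m | ∃ s : Fin (n+1) → ℕ, (∀ j, s j ≤ v) ∧ s ∉ S ∧ Fin.snoc s m ∈ X} with hU
    have hUfin : ∀ v, (U v).Finite := by
      intro v
      have hBfin : {s : Fin (n+1) → ℕ | ∀ j, s j ≤ v}.Finite := by
        have : {s : Fin (n+1) → ℕ | ∀ j, s j ≤ v} =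
            Set.pi Set.univ (fun _ => Set.Iic v) := by
          ext s; simp [Set.mem_pi, Pi.le_def]
        rw [this]
        exact Set.Finite.pi (fun _ => Set.finite_Iic v)
      have : U v ⊆ ⋃ s ∈ {s : Fin (n+1) → ℕ | (∀ j, s j ≤ v) ∧ s ∉ S},
          {m | Fin.snoc s m ∈ X} := by
        rintro m ⟨s, hsv, hsS, hsm⟩
        exact Set.mem_biUnion ⟨hsv, hsS⟩ hsm
      refine (Set.Finite.biUnion (hBfin.subset (fun s hs => hs.1)) ?_).subset this
      rintro s ⟨_, hsS⟩
      exact Set.not_infinite.mp hsS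
    set g : ℕ → ℕ := fun v => sSup (U v) + 1 with hg
    refine ⟨fun v => max (h₀ v) (g v), ?_⟩
    intro f hf hle
    have hleh₀ : LeStar h₀ f := hle.subset (fun x hx => by
      simp only [Set.mem_setOf_eq] at hx ⊢; omega)
    have hB₀ := hh₀ f hf hleh₀
    have hE : {x | f x < g x}.Finite := hle.subset (fun x hx => by
      simp only [Set.mem_setOf_eq] at hx ⊢; omega)
    refine ((hB₀.union (hE.biUnion (fun v _ => Set.finite_Iic v))).subset ?_)
    rintro i ⟨t, htX, ht0, hchain⟩
    set s : Fin (n+1) → ℕ := Fin.init t with hsdef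
    set m : ℕ := t (Fin.last (n+1)) with hmdef
    have hsnoc : Fin.snoc s m = t := Fin.snoc_init_self t
    have hchain_s : ∀ j : Fin n, f (s j.castSucc) ≤ s j.succ := by
      intro j
      have := hchain j.castSucc
      rw [hsdef]
      simp only [Fin.init]
      rw [Fin.succ_castSucc] at this
      exact this
    have hmono : StrictMono s := by
      rw [Fin.strictMono_iff_lt_succ]
      intro j
      exact lt_of_lt_of_le (hf _) (hchain_s j)
    have hs0 : s 0 = i := by
      rw [hsdef]; simp only [Fin.init]; rw [Fin.castSucc_zero]; exact ht0
    by_cases hsS : s ∈ S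
    · left
      exact ⟨s, hsS, hs0, hchain_s⟩
    · right
      set v : ℕ := s (Fin.last n) with hvdef
      have hcoords : ∀ j, s j ≤ v := fun j => hmono.monotone (Fin.le_last j)
      have hmU : m ∈ U v := ⟨s, hcoords, hsS, by rw [hsnoc]; exact htX⟩
      have hmlt : m < g v := Nat.lt_succ_of_le (le_csSup (hUfin v).bddAbove hmU)
      have hfv : f v ≤ m := by
        have := hchain (Fin.last n)
        rw [hmdef, hvdef, hsdef]
        simp only [Fin.init]
        rw [← Fin.succ_last]
        exact this
      have hvE : v ∈ {x | f x < g x} := by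
        simp only [Set.mem_setOf_eq]; omega
      refine Set.mem_biUnion hvE ?_
      simp only [Set.mem_Iic]
      rw [← hs0]
      exact hcoords 0

lemma ofFn_getD {n : ℕ} (t : Fin n → ℕ) (j : ℕ) (hj : j < n) :
    (List.ofFn t).getD j 0 = t ⟨j, hj⟩ := by
  rw [List.getD_eq_getElem _ _ (by simp [hj]), List.getElem_ofFn]


/-- If `𝔟 = 𝔡` there is a `𝔡`-indexed family of Hechler trees forming, modulo
finitely many first coordinates, a decreasing chain that eventually avoids every
member of `FIN^(n+1)`. -/
theorem hechler_trees_of_b_eq_d (n : ℕ) (h : bNumber = dNumber) :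
    ∃ T : Ordinal → Set (List ℕ),
      (∀ α < dNumber.ord, IsHechlerTree n (T α)) ∧
      (∀ α β : Ordinal, α < β → β < dNumber.ord →
        ∃ N : ℕ, ∀ s ∈ T β, s ∈ T α ∨ ∃ i < N, s.head? = some i) ∧
      (∀ X ∈ FINpow n, ∃ α < dNumber.ord, ∀ β : Ordinal, α < β → β < dNumber.ord →
        ∃ N : ℕ, ∀ t : Fin (n + 1) → ℕ, t ∈ X → List.ofFn t ∈ T β → t 0 < N) := by
  obtain ⟨f, hgt, hmono, hdom⟩ := exists_scale h
  refine ⟨fun α => Tr n (f α), fun α _ => tr_hechler n (f α), ?_, ?_⟩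
  · intro α β hαβ hβ
    exact tr_almost_subset n (f α) (f β) (hgt β) (hmono α β hαβ hβ)
  · intro X hX
    obtain ⟨hh, hhp⟩ := finpow_bound n X hX
    obtain ⟨α, hα, hhα⟩ := hdom hh
    refine ⟨α, hα, ?_⟩
    intro β hαβ hβ
    have hhβ : LeStar hh (f β) := leStar_trans hhα (hmono α β hαβ hβ)
    have hbad := hhp (f β) (hgt β) hhβ
    obtain ⟨b, hb⟩ := hbad.bddAbove
    refine ⟨b + 1, ?_⟩
    rintro t htX ⟨_, hchain⟩
    have hmem : t 0 ∈ {i | ∃ t ∈ X, t 0 = i ∧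
        ∀ j : Fin n, f β (t j.castSucc) ≤ t j.succ} := by
      refine ⟨t, htX, rfl, ?_⟩
      intro j
      have hj1 : (j : ℕ) + 1 < (List.ofFn t).length := by
        simp only [List.length_ofFn]; omega
      have := hchain j.val hj1
      rw [ofFn_getD t j.val (by omega), ofFn_getD t (j.val + 1) (by omega)] at this
      have e1 : (⟨j.val, by omega⟩ : Fin (n+1)) = j.castSucc := rfl
      have e2 : (⟨j.val + 1, by omega⟩ : Fin (n+1)) = j.succ := rfl
      rwa [e1, e2] at this
    exact Nat.lt_succ_of_le (hb hmem)
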